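/- arXiv:2502.10769 — 4 statements merged into one kernel-verified Lean document; each statement's English description precedes it below -/
import Mathlib

section
/- Let R be a commutative ring and I an ideal of R. Let u ∈ (R,I)⟨X_1,…,X_n⟩ satisfy u(0) = 0 and suppose every coefficient of u lies in √I. Then the formal power series ∑_{i≥0} (−1)^i u^i (well-defined since u has zero constant term) belongs to (R,I)⟨X_1,…,X_n⟩, and (1 + u)·∑_{i≥0} (−1)^i u^i = 1; in particular 1 + u is a unit of (R,I)⟨X_1,…,X_n⟩. -/
open MvPowerSeries

/-- Membership in the Tate algebra `(R,I)⟨X_1,…,X_n⟩`: for every `k ≥ 1`, all but finitely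
many coefficients lie in `I ^ k`. -/
def TateMem {n : ℕ} {R : Type*} [CommRing R] (I : Ideal R)
    (f : MvPowerSeries (Fin n) R) : Prop :=
  ∀ k : ℕ, 1 ≤ k → {d : Fin n →₀ ℕ | MvPowerSeries.coeff d f ∉ I ^ k}.Finite

/-- The formal partial derivative of a multivariate power series with respect to `X j`. -/
noncomputable def psDeriv {n : ℕ} {R : Type*} [CommRing R] (j : Fin n)
    (f : MvPowerSeries (Fin n) R) : MvPowerSeries (Fin n) R :=
  fun d => (d j + 1 : ℕ) * MvPowerSeries.coeff (d + Finsupp.single j 1) f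

/-- Substitution of the power series `G j` for the variables `X j` in `f`
(the intended use is when each `G j` has zero constant coefficient, in which case
the `finsum` below is a finite sum for each fixed monomial). -/
noncomputable def psSubst {n : ℕ} {R : Type*} [CommRing R]
    (G : Fin n → MvPowerSeries (Fin n) R) (f : MvPowerSeries (Fin n) R) :
    MvPowerSeries (Fin n) R :=
  fun e => ∑ᶠ d : Fin n →₀ ℕ,
    MvPowerSeries.coeff d f * MvPowerSeries.coeff e (∏ j, G j ^ d j)

/-- `f` is a unit of the Tate algebra `(R,I)⟨X_1,…,X_n⟩`. -/
def TateUnit {n : ℕ} {R : Type*} [CommRing R] (I : Ideal R)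
    (f : MvPowerSeries (Fin n) R) : Prop :=
  TateMem I f ∧ ∃ g, TateMem I g ∧ f * g = 1

/-- The Jacobian conjecture `JC(R,n)`. -/
def JC (R : Type*) [CommRing R] (n : ℕ) : Prop :=
  ∀ F : Fin n → MvPolynomial (Fin n) R,
    IsUnit (Matrix.det (Matrix.of fun i j => MvPolynomial.pderiv j (F i))) →
    ∃ G : Fin n → MvPolynomial (Fin n) R,
      (∀ i, MvPolynomial.bind₁ G (F i) = MvPolynomial.X i) ∧
      (∀ i, MvPolynomial.bind₁ F (G i) = MvPolynomial.X i)

/-- The Tate-Jacobian conjecture `TJC(R,I,n)`. -/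
def TJC (R : Type*) [CommRing R] (I : Ideal R) (n : ℕ) : Prop :=
  ∀ F : Fin n → MvPowerSeries (Fin n) R,
    (∀ i, TateMem I (F i)) →
    (∀ i, MvPowerSeries.constantCoeff (F i) = 0) →
    TateUnit I (Matrix.det (Matrix.of fun i j => psDeriv j (F i))) →
    ∃ G : Fin n → MvPowerSeries (Fin n) R,
      (∀ i, TateMem I (G i)) ∧
      (∀ i, MvPowerSeries.constantCoeff (G i) = 0) ∧
      (∀ i, psSubst G (F i) = MvPowerSeries.X i) ∧
      (∀ i, psSubst F (G i) = MvPowerSeries.X i)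

/-- The formal power series `∑_{i ≥ 0} (-1)^i u^i`, defined coefficientwise (the sum of the
coefficients of the `(-1)^i * u^i` at each monomial is finite when `u(0) = 0`). -/
noncomputable def geomInv {n : ℕ} {R : Type*} [CommRing R]
    (u : MvPowerSeries (Fin n) R) : MvPowerSeries (Fin n) R :=
  fun e => ∑ᶠ i : ℕ, MvPowerSeries.coeff e ((-1) ^ i * u ^ i)


/-!
The partial sums `S_N = ∑_{i<N} (-u)^i` satisfy `(1 + u) S_N = 1 - (-u)^N`, and since `u(0) = 0`
the coefficient of `u^N` at a monomial of degree `< N` vanishes, so `geomInv u` agrees with `S_N`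
in low degrees and `(1 + u) · geomInv u = 1`. For the Tate condition, only finitely many
coefficients of `u` lie outside `I`; they generate a finitely generated ideal `A ≤ √I`, so
`A^m ≤ I` for some `m`, and every coefficient of `u` lies in `J = I ⊔ A` with `J^(m+1) ≤ I`.
Hence all coefficients of `u^i` lie in `I^k` once `i ≥ (m+1)k`, and `geomInv u` is congruent
modulo `I^k` to the finite sum `S_{(m+1)k}`, which lies in the Tate algebra.
-/

namespace MvPowerSeries

variable {σ R : Type*} [CommRing R] {f g : MvPowerSeries σ R} {P Q : Ideal R}

theorem coeff_mul_mem_mul (hf : ∀ d, coeff d f ∈ P) (hg : ∀ d, coeff d g ∈ Q) (d : σ →₀ ℕ) :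
    coeff d (f * g) ∈ P * Q := by
  classical
  rw [coeff_mul]
  exact Ideal.sum_mem _ fun p _ => Ideal.mul_mem_mul (hf _) (hg _)

theorem coeff_mul_mem_of_left (hf : ∀ d, coeff d f ∈ P) (g : MvPowerSeries σ R) (d : σ →₀ ℕ) :
    coeff d (f * g) ∈ P := by
  simpa using coeff_mul_mem_mul (Q := ⊤) hf (fun _ => Submodule.mem_top) d

theorem coeff_pow_mem_pow (hf : ∀ d, coeff d f ∈ P) (i : ℕ) (d : σ →₀ ℕ) :
    coeff d (f ^ i) ∈ P ^ i := by
  induction i generalizing d with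
  | zero => simp [Ideal.one_eq_top]
  | succ i ih => rw [pow_succ, pow_succ]; exact coeff_mul_mem_mul ih hf d

theorem coeff_pow_eq_zero_of_degree_lt (hf : constantCoeff f = 0) {d : σ →₀ ℕ} {i : ℕ}
    (h : d.degree < i) : coeff d (f ^ i) = 0 :=
  coeff_eq_zero_of_constantCoeff_nilpotent (m := 1) (by simp [hf]) (by omega)

end MvPowerSeries

namespace TateMem

variable {n : ℕ} {R : Type*} [CommRing R] {I : Ideal R} {f g : MvPowerSeries (Fin n) R}

theorem zero : TateMem I (0 : MvPowerSeries (Fin n) R) := fun _ _ => by simp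

theorem one : TateMem I (1 : MvPowerSeries (Fin n) R) := fun _ _ =>
  (Set.finite_singleton 0).subset fun d hd => by
    by_contra h
    rw [Set.mem_singleton_iff] at h
    exact hd (by simp [coeff_one, h])

theorem add (hf : TateMem I f) (hg : TateMem I g) : TateMem I (f + g) := fun k hk =>
  ((hf k hk).union (hg k hk)).subset fun d hd => by
    by_contra h
    simp only [Set.mem_union, Set.mem_ofPred_eq, not_or, not_not] at h
    exact hd (by rw [map_add]; exact add_mem h.1 h.2)

theorem neg (hf : TateMem I f) : TateMem I (-f) := by
  simpa only [TateMem, map_neg, neg_mem_iff] using hf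

theorem mul (hf : TateMem I f) (hg : TateMem I g) : TateMem I (f * g) := fun k hk => by
  classical
  refine ((hf k hk).image2 (· + ·) (hg k hk)).subset fun e he => ?_
  by_contra hne
  refine he ?_
  rw [coeff_mul]
  refine Ideal.sum_mem _ fun p hp => ?_
  by_cases h₁ : coeff p.1 f ∈ I ^ k
  · exact Ideal.mul_mem_right _ _ h₁
  by_cases h₂ : coeff p.2 g ∈ I ^ k
  · exact Ideal.mul_mem_left _ _ h₂
  exact (hne (Finset.HasAntidiagonal.mem_antidiagonal.mp hp ▸ Set.mem_image2_of_mem h₁ h₂)).elim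

theorem pow (hf : TateMem I f) (i : ℕ) : TateMem I (f ^ i) := by
  induction i with
  | zero => simpa using one
  | succ i ih => rw [pow_succ]; exact ih.mul hf

theorem sum_range_pow (hf : TateMem I f) (N : ℕ) : TateMem I (∑ i ∈ Finset.range N, f ^ i) :=
  Finset.sum_induction _ (TateMem I) (fun _ _ => add) zero
    fun i _ => hf.pow i

theorem of_forall_exists_sub_mem
    (h : ∀ k, 1 ≤ k → ∃ g, TateMem I g ∧ ∀ d, coeff d (f - g) ∈ I ^ k) : TateMem I f :=
  fun k hk => by
    obtain ⟨g, hg, hfg⟩ := h k hk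
    refine (hg k hk).subset fun d hd hgd => hd ?_
    simpa using add_mem (hfg d) hgd

theorem exists_ideal_pow_le (hf : TateMem I f) (hrad : ∀ d, coeff d f ∈ I.radical) :
    ∃ (J : Ideal R) (m : ℕ), J ^ m ≤ I ∧ ∀ d, coeff d f ∈ J := by
  set B := {d | coeff d f ∉ I ^ 1}
  set A := Ideal.span ((coeff · f) '' B)
  have hA : A ≤ I.radical := Ideal.span_le.mpr <| by rintro _ ⟨d, -, rfl⟩; exact hrad d
  obtain ⟨m, hm⟩ := Ideal.exists_pow_le_of_le_radical_of_fg hA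
    (Submodule.fg_span ((hf 1 le_rfl).image _))
  refine ⟨I ⊔ A, 1 + m, ?_, fun d => ?_⟩
  · exact Ideal.sup_pow_add_le_pow_sup_pow.trans (by simpa using hm)
  · by_cases hd : coeff d f ∈ I ^ 1
    · exact Ideal.mem_sup_left (by simpa using hd)
    · exact Ideal.mem_sup_right (Ideal.subset_span ⟨d, hd, rfl⟩)

theorem exists_coeff_pow_mem_pow (hf : TateMem I f) (hrad : ∀ d, coeff d f ∈ I.radical) :
    ∃ m, ∀ k i, m * k ≤ i → ∀ d, coeff d (f ^ i) ∈ I ^ k := by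
  obtain ⟨J, m, hJ, hfJ⟩ := hf.exists_ideal_pow_le hrad
  refine ⟨m, fun k i hi d => ?_⟩
  rw [← Nat.add_sub_cancel' hi, pow_add]
  refine coeff_mul_mem_of_left (fun d => ?_) _ d
  exact Ideal.pow_right_mono hJ k (pow_mul J m k ▸ coeff_pow_mem_pow hfJ (m * k) d)

end TateMem

section geomInv

variable {n : ℕ} {R : Type*} [CommRing R] {u : MvPowerSeries (Fin n) R}

theorem coeff_geomInv (hu0 : constantCoeff u = 0) {d : Fin n →₀ ℕ} {N : ℕ} (hN : d.degree < N) :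
    coeff d (geomInv u) = coeff d (∑ i ∈ Finset.range N, (-u) ^ i) := by
  change ∑ᶠ i, coeff d ((-1) ^ i * u ^ i) = _
  simp_rw [← neg_pow u, map_sum]
  refine finsum_eq_finsetSum_of_support_subset _ fun i hi => ?_
  by_contra hiN
  simp only [Finset.coe_range, Set.mem_Iio, not_lt] at hiN
  exact hi (coeff_pow_eq_zero_of_degree_lt (by simp [hu0]) (by omega))

theorem mul_geomInv (hu0 : constantCoeff u = 0) : (1 + u) * geomInv u = 1 := by
  classical
  ext e
  set N := e.degree + 1
  have hpartial : coeff e ((1 + u) * geomInv u)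
      = coeff e ((1 + u) * ∑ i ∈ Finset.range N, (-u) ^ i) := by
    rw [coeff_mul, coeff_mul]
    refine Finset.sum_congr rfl fun p hp => congrArg _ (coeff_geomInv hu0 ?_)
    have hle : p.2 ≤ e := Finset.HasAntidiagonal.mem_antidiagonal.mp hp ▸ le_add_self
    have := Finsupp.degree_mono hle
    omega
  have hgeom := mul_neg_geom_sum (-u) N
  rw [sub_neg_eq_add] at hgeom
  rw [hpartial, hgeom, map_sub,
    coeff_pow_eq_zero_of_degree_lt (by simp [hu0]) (Nat.lt_succ_self _), sub_zero]

theorem tateMem_geomInv {I : Ideal R} (huT : TateMem I u) (hu0 : constantCoeff u = 0)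
    (hurad : ∀ d, coeff d u ∈ I.radical) : TateMem I (geomInv u) := by
  obtain ⟨m, hm⟩ := huT.neg.exists_coeff_pow_mem_pow fun d => by simpa using hurad d
  refine TateMem.of_forall_exists_sub_mem fun k _ =>
    ⟨∑ i ∈ Finset.range (m * k), (-u) ^ i, huT.neg.sum_range_pow _, fun d => ?_⟩
  rw [map_sub, coeff_geomInv hu0 (N := m * k + (d.degree + 1)) (by omega),
    Finset.sum_range_add, map_add, add_sub_cancel_left, map_sum]
  exact Ideal.sum_mem _ fun i _ => hm k _ (Nat.le_add_right _ _) d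

end geomInv

/-- If `u ∈ (R,I)⟨X_1,…,X_n⟩` has `u(0) = 0` and all coefficients in `√I`, then
`∑_{i ≥ 0} (-1)^i u^i` lies in the Tate algebra, `(1 + u) ⬝ ∑_{i ≥ 0} (-1)^i u^i = 1`, and in
particular `1 + u` is a unit of the Tate algebra. -/
theorem stmt_6 (R : Type*) [CommRing R] (I : Ideal R) (n : ℕ)
    (u : MvPowerSeries (Fin n) R) (huT : TateMem I u)
    (hu0 : MvPowerSeries.constantCoeff u = 0)
    (hurad : ∀ d : Fin n →₀ ℕ, MvPowerSeries.coeff d u ∈ I.radical) :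
    TateMem I (geomInv u) ∧ (1 + u) * geomInv u = 1 ∧ TateUnit I (1 + u) := by
  have hinv := tateMem_geomInv huT hu0 hurad
  have hmul := mul_geomInv hu0
  exact ⟨hinv, hmul, TateMem.one.add huT, geomInv u, hinv, hmul⟩
end

section
/- Let R be a commutative ring and I an ideal of R. Let u ∈ (R,I)⟨X_1,…,X_n⟩ be such that every coefficient of u lies in √I. Then for every N ≥ 1 there exists a ≥ 1 such that every coefficient of u^a lies in I^N. -/
open MvPowerSeries

/-! Reducing modulo `I ^ N`, the image of `u` has finitely many nonzero coefficients (as `u` is in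
the Tate algebra) and all of them are nilpotent (as `√(I ^ N) = √I`). A power series with these
properties is a finite sum of nilpotent monomials, hence nilpotent; so some power `u ^ a` vanishes
modulo `I ^ N`, i.e. has all its coefficients in `I ^ N`. -/

theorem MvPowerSeries.isNilpotent_of_finite_support {σ S : Type*} [CommSemiring S]
    {f : MvPowerSeries σ S} (hfin : {d | coeff d f ≠ 0}.Finite)
    (hnil : ∀ d, IsNilpotent (coeff d f)) : IsNilpotent f := by
  classical
  have hsum : f = ∑ d ∈ hfin.toFinset, monomial d (coeff d f) := by
    ext e
    rw [map_sum, Finset.sum_eq_single e]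
    · simp
    · intro d _ hde
      simp [coeff_monomial, hde.symm]
    · intro he
      simpa using he
  rw [hsum]
  refine isNilpotent_sum fun d _ => ?_
  obtain ⟨k, hk⟩ := hnil d
  exact ⟨k, by rw [monomial_pow, hk, map_zero]⟩

/-- If `u ∈ (R,I)⟨X_1,…,X_n⟩` has all coefficients in `√I`, then for every `N ≥ 1` there is
`a ≥ 1` such that all coefficients of `u^a` lie in `I^N`. -/
theorem stmt_7 (R : Type*) [CommRing R] (I : Ideal R) (n : ℕ)
    (u : MvPowerSeries (Fin n) R) (huT : TateMem I u)
    (hurad : ∀ d : Fin n →₀ ℕ, MvPowerSeries.coeff d u ∈ I.radical) :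
    ∀ N : ℕ, 1 ≤ N → ∃ a : ℕ, 1 ≤ a ∧
      ∀ d : Fin n →₀ ℕ, MvPowerSeries.coeff d (u ^ a) ∈ I ^ N := by
  intro N hN
  let π := MvPowerSeries.map (σ := Fin n) (Ideal.Quotient.mk (I ^ N))
  have coeff_π_eq_zero : ∀ f d, coeff d (π f) = 0 ↔ coeff d f ∈ I ^ N := fun f d => by
    rw [coeff_map, Ideal.Quotient.eq_zero_iff_mem]
  obtain ⟨a, ha⟩ : IsNilpotent (π u) := by
    refine isNilpotent_of_finite_support ((huT N hN).subset fun d hd => ?_) fun d => ?_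
    · exact mt (coeff_π_eq_zero u d).mpr hd
    · obtain ⟨k, hk⟩ : coeff d u ∈ (I ^ N).radical := by
        rw [Ideal.radical_pow I (by omega)]
        exact hurad d
      exact ⟨k, by rw [coeff_map, ← map_pow, Ideal.Quotient.eq_zero_iff_mem]; exact hk⟩
  refine ⟨a + 1, Nat.le_add_left 1 a, fun d => (coeff_π_eq_zero _ d).mp ?_⟩
  rw [map_pow, pow_succ, ha, zero_mul, map_zero]
end

section
/- Let R be a commutative ring and I an ideal of R. Let F ∈ (R,I)⟨X_1,…,X_n⟩^n with F(0) = 0, and suppose the coefficientwise reduction F̄ ∈ (R/I)[X_1,…,X_n]^n of F modulo I is invertible in (R/I)[X_1,…,X_n]^n. Then for every e ≥ 1 and every index i (1 ≤ i ≤ n), there exists H ∈ (R,I)⟨X_1,…,X_n⟩ with H(0) = 0 such that every coefficient of X_i − H(F_1,…,F_n) lies in I^e, where H(F_1,…,F_n) denotes the substitution of the components of F for the variables of H. -/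
/-!
Lift a polynomial inverse `Ḡ` of `F̄` to polynomials `G` over `R`, so that `X_j ≡ G_j(F)` modulo
`I`. Polynomial approximations `X_i ≡ H(F) mod I^m` are then improved one power of `I` at a time:
the error `X_i - H(F)` lies in the Tate algebra and has coefficients in `I^m`, so modulo `I^(m+1)`
it equals a polynomial `P` with coefficients in `I^m`; as `G(F) ≡ X mod I`, also
`P(G(F)) ≡ P mod I^(m+1)`, so `H + P(G)` approximates `X_i` modulo `I^(m+1)`.
Since `F(0) = 0`, the constant term of `H` is that of `H(F) ≡ X_i`, so it lies in `I^e` and may be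
dropped.
-/

open MvPowerSeries

namespace MvPolynomial

variable {σ R S : Type*} [CommRing R] [CommRing S] [Algebra R S]

theorem aeval_sub_aeval_mem {𝔞 : Ideal S} {K L : σ → S} (h : ∀ j, K j - L j ∈ 𝔞)
    (P : MvPolynomial σ R) : aeval K P - aeval L P ∈ 𝔞 := by
  rw [← Ideal.Quotient.eq, ← Ideal.Quotient.mkₐ_eq_mk R, comp_aeval_apply, comp_aeval_apply]
  simp only [Ideal.Quotient.mkₐ_eq_mk, Ideal.Quotient.eq.mpr (h _)]

theorem aeval_sub_aeval_mem_map_mul {J : Ideal R} {𝔞 : Ideal S} {K L : σ → S}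
    (h : ∀ j, K j - L j ∈ 𝔞) {P : MvPolynomial σ R} (hP : ∀ d, P.coeff d ∈ J) :
    aeval K P - aeval L P ∈ J.map (algebraMap R S) * 𝔞 := by
  rw [P.as_sum, map_sum, map_sum, ← Finset.sum_sub_distrib]
  refine Ideal.sum_mem _ fun d _ => ?_
  rw [← mul_one (P.coeff d), ← C_mul_monomial, map_mul, map_mul, aeval_C, aeval_C, ← mul_sub]
  exact Ideal.mul_mem_mul (Ideal.mem_map_of_mem _ (hP d)) (aeval_sub_aeval_mem h _)

end MvPolynomial

namespace MvPowerSeries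

variable {σ τ R : Type*} [CommRing R]

noncomputable def coeffIdeal (J : Ideal R) : Ideal (MvPowerSeries σ R) :=
  RingHom.ker (map (Ideal.Quotient.mk J))

theorem mem_coeffIdeal {J : Ideal R} {f : MvPowerSeries σ R} :
    f ∈ coeffIdeal J ↔ ∀ d, coeff d f ∈ J := by
  simp [coeffIdeal, RingHom.mem_ker, MvPowerSeries.ext_iff, Ideal.Quotient.eq_zero_iff_mem]

theorem C_mem_coeffIdeal {J : Ideal R} {r : R} (hr : r ∈ J) :
    C r ∈ coeffIdeal (σ := σ) J := by
  rw [coeffIdeal, RingHom.mem_ker, map_C, Ideal.Quotient.eq_zero_iff_mem.mpr hr, map_zero]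

theorem coeffIdeal_mul_le (J J' : Ideal R) :
    coeffIdeal J * coeffIdeal J' ≤ coeffIdeal (σ := σ) (J * J') := by
  classical
  refine Ideal.mul_le.mpr fun f hf g hg => mem_coeffIdeal.mpr fun d => ?_
  rw [coeff_mul]
  exact Ideal.sum_mem _ fun p _ =>
    Ideal.mul_mem_mul (mem_coeffIdeal.mp hf p.1) (mem_coeffIdeal.mp hg p.2)

theorem map_algebraMap_le_coeffIdeal (J : Ideal R) :
    J.map (algebraMap R (MvPowerSeries σ R)) ≤ coeffIdeal J :=
  Ideal.map_le_iff_le_comap.mpr fun _ hr => C_mem_coeffIdeal hr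

theorem aeval_sub_aeval_mem_coeffIdeal_mul {J J' : Ideal R} {K L : τ → MvPowerSeries σ R}
    (h : ∀ j, K j - L j ∈ coeffIdeal J') {P : MvPolynomial τ R} (hP : ∀ d, P.coeff d ∈ J) :
    MvPolynomial.aeval K P - MvPolynomial.aeval L P ∈ coeffIdeal (J * J') :=
  coeffIdeal_mul_le J J' <| Ideal.mul_mono_left (map_algebraMap_le_coeffIdeal J)
    (MvPolynomial.aeval_sub_aeval_mem_map_mul h hP)

theorem coe_eq_aeval_X (P : MvPolynomial σ R) :
    (P : MvPowerSeries σ R) = MvPolynomial.aeval X P := by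
  simpa [map_id] using MvPolynomial.comp_aeval_apply
    (MvPolynomial.coeToMvPowerSeries.algHom R) (f := MvPolynomial.X) P

theorem constantCoeff_aeval {F : τ → MvPowerSeries σ R} (hF : ∀ j, constantCoeff (F j) = 0)
    (P : MvPolynomial τ R) :
    constantCoeff (MvPolynomial.aeval F P) = MvPolynomial.constantCoeff P := by
  simp [hF, algebraMap_apply]

theorem map_aeval_eq_coe_bind₁ {S : Type*} [CommRing S] [Algebra R S]
    {F : τ → MvPowerSeries σ R} {Fbar : τ → MvPolynomial σ S}
    (hF : ∀ j, (Fbar j : MvPowerSeries σ S) = map (algebraMap R S) (F j))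
    (P : MvPolynomial τ R) :
    map (algebraMap R S) (MvPolynomial.aeval F P) =
      MvPolynomial.bind₁ Fbar (P.map (algebraMap R S)) := by
  calc map (algebraMap R S) (MvPolynomial.aeval F P)
      = mapAlgHom (σ := σ) (Algebra.ofId R S) (MvPolynomial.aeval F P) := rfl
    _ = MvPolynomial.aeval (fun j => (Fbar j : MvPowerSeries σ S)) (P.map (algebraMap R S)) := by
      rw [MvPolynomial.comp_aeval_apply, MvPolynomial.aeval_map_algebraMap]
      simp only [hF, mapAlgHom_apply, Algebra.toRingHom_ofId]
    _ = _ := by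
      simpa [map_id] using (MvPolynomial.comp_aeval_apply
        (MvPolynomial.coeToMvPowerSeries.algHom S) (f := Fbar) (P.map (algebraMap R S))).symm

end MvPowerSeries

section Tate

variable {n : ℕ} {R : Type*} [CommRing R] {I : Ideal R}

theorem psSubst_coe (F : Fin n → MvPowerSeries (Fin n) R) (P : MvPolynomial (Fin n) R) :
    psSubst F P = MvPolynomial.aeval F P := by
  ext e
  rw [MvPolynomial.aeval_def, MvPolynomial.eval₂_eq', map_sum]
  refine (finsum_eq_sum_of_support_subset _ fun d hd => ?_).trans
    (Finset.sum_congr rfl fun d _ => ?_)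
  · by_contra hdP
    simp [MvPolynomial.notMem_support_iff.mp hdP] at hd
  · rw [MvPolynomial.coeff_coe, MvPowerSeries.algebraMap_apply, Algebra.algebraMap_self,
      RingHom.id_apply, coeff_C_mul]

theorem tateMem_coe (I : Ideal R) (P : MvPolynomial (Fin n) R) :
    TateMem I (P : MvPowerSeries (Fin n) R) := fun k _ =>
  P.support.finite_toSet.subset fun d hd => by
    by_contra hdP
    exact hd (by simp [MvPolynomial.notMem_support_iff.mp hdP])

theorem TateMem.add_s10 {f g : MvPowerSeries (Fin n) R} (hf : TateMem I f) (hg : TateMem I g) :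
    TateMem I (f + g) := fun k hk =>
  ((hf k hk).union (hg k hk)).subset fun d hd => by
    by_contra hfg
    rw [Set.mem_union, not_or] at hfg
    exact hd (by simpa using add_mem (of_not_not hfg.1) (of_not_not hfg.2))

theorem TateMem.mul_s10 {f g : MvPowerSeries (Fin n) R} (hf : TateMem I f) (hg : TateMem I g) :
    TateMem I (f * g) := by
  classical
  intro k hk
  refine ((hf k hk).image2 (· + ·) (hg k hk)).subset fun d hd => ?_
  by_contra hfg
  apply hd
  rw [coeff_mul]
  refine Ideal.sum_mem _ fun p hp => ?_
  by_contra hp'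
  have hf' : coeff p.1 f ∉ I ^ k := fun h => hp' (Ideal.mul_mem_right _ _ h)
  have hg' : coeff p.2 g ∉ I ^ k := fun h => hp' (Ideal.mul_mem_left _ _ h)
  exact hfg ⟨p.1, hf', p.2, hg', Finset.HasAntidiagonal.mem_antidiagonal.mp hp⟩

variable (n) in
def tateSubalgebra (I : Ideal R) : Subalgebra R (MvPowerSeries (Fin n) R) where
  carrier := {f | TateMem I f}
  add_mem' := TateMem.add_s10
  mul_mem' := TateMem.mul_s10
  algebraMap_mem' r := by
    simpa [MvPowerSeries.algebraMap_apply] using tateMem_coe (n := n) I (MvPolynomial.C r)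

theorem TateMem.aeval {F : Fin n → MvPowerSeries (Fin n) R} (hF : ∀ j, TateMem I (F j))
    (P : MvPolynomial (Fin n) R) : TateMem I (MvPolynomial.aeval F P) := by
  have hP : MvPolynomial.aeval F P ∈ (MvPolynomial.aeval F).range := ⟨P, rfl⟩
  rw [MvPolynomial.aeval_range] at hP
  exact Algebra.adjoin_le (S := tateSubalgebra n I) (Set.range_subset_iff.mpr hF) hP

theorem TateMem.sub {f g : MvPowerSeries (Fin n) R} (hf : TateMem I f) (hg : TateMem I g) :
    TateMem I (f - g) :=
  (tateSubalgebra n I).sub_mem hf hg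

theorem TateMem.exists_sub_mem_coeffIdeal {J : Ideal R} {f : MvPowerSeries (Fin n) R}
    (hf : TateMem I f) (hfJ : f ∈ coeffIdeal J) (k : ℕ) :
    ∃ P : MvPolynomial (Fin n) R,
      (∀ d, P.coeff d ∈ J) ∧ f - P ∈ coeffIdeal (I ^ (k + 1)) := by
  classical
  set S := (hf (k + 1) k.succ_pos).toFinset
  have hcoeff : ∀ d, (∑ b ∈ S, MvPolynomial.monomial b (coeff b f)).coeff d =
      if d ∈ S then coeff d f else 0 := by
    simp [MvPolynomial.coeff_sum, MvPolynomial.coeff_monomial]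
  refine ⟨∑ b ∈ S, MvPolynomial.monomial b (coeff b f), fun d => ?_,
    mem_coeffIdeal.mpr fun d => ?_⟩
  · rw [hcoeff]
    split_ifs
    exacts [mem_coeffIdeal.mp hfJ d, J.zero_mem]
  · rw [map_sub, MvPolynomial.coeff_coe, hcoeff]
    split_ifs with hd
    · simp
    · simpa [S] using hd

end Tate

section Lifting

variable {n : ℕ} {R : Type*} [CommRing R] {I : Ideal R}

theorem X_sub_aeval_mem_coeffIdeal
    {F : Fin n → MvPowerSeries (Fin n) R} {Fbar : Fin n → MvPolynomial (Fin n) (R ⧸ I)}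
    (hFbar : ∀ i, (Fbar i : MvPowerSeries (Fin n) (R ⧸ I)) = map (Ideal.Quotient.mk I) (F i))
    {G : MvPolynomial (Fin n) R} {j : Fin n}
    (hG : MvPolynomial.bind₁ Fbar (G.map (Ideal.Quotient.mk I)) = MvPolynomial.X j) :
    X j - MvPolynomial.aeval F G ∈ coeffIdeal I := by
  rw [← Ideal.Quotient.algebraMap_eq] at hFbar hG
  rw [coeffIdeal, RingHom.sub_mem_ker_iff, map_X, ← Ideal.Quotient.algebraMap_eq,
    map_aeval_eq_coe_bind₁ hFbar, hG, MvPolynomial.coe_X]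

theorem exists_sub_aeval_mem_coeffIdeal_pow {F : Fin n → MvPowerSeries (Fin n) R}
    (hF : ∀ j, TateMem I (F j)) {G : Fin n → MvPolynomial (Fin n) R}
    (hG : ∀ j, X j - MvPolynomial.aeval F (G j) ∈ coeffIdeal I)
    {T : MvPowerSeries (Fin n) R} (hT : TateMem I T) (m : ℕ) :
    ∃ H : MvPolynomial (Fin n) R, T - MvPolynomial.aeval F H ∈ coeffIdeal (I ^ m) := by
  induction m with
  | zero => exact ⟨0, mem_coeffIdeal.mpr fun _ => by simp⟩
  | succ m ih =>
    obtain ⟨H, hH⟩ := ih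
    obtain ⟨P, hPI, hP⟩ := (hT.sub (TateMem.aeval hF H)).exists_sub_mem_coeffIdeal hH m
    have hPG : (P : MvPowerSeries (Fin n) R) - MvPolynomial.aeval F (MvPolynomial.bind₁ G P) ∈
        coeffIdeal (I ^ (m + 1)) := by
      rw [pow_succ, coe_eq_aeval_X, MvPolynomial.aeval_bind₁]
      exact aeval_sub_aeval_mem_coeffIdeal_mul hG hPI
    refine ⟨H + MvPolynomial.bind₁ G P, ?_⟩
    convert add_mem hP hPG using 1
    rw [map_add]
    ring

theorem sub_aeval_sub_C_constantCoeff_mem {J : Ideal R} {F : Fin n → MvPowerSeries (Fin n) R}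
    (hF : ∀ j, constantCoeff (F j) = 0) {T : MvPowerSeries (Fin n) R} (hT : constantCoeff T = 0)
    {H : MvPolynomial (Fin n) R} (hH : T - MvPolynomial.aeval F H ∈ coeffIdeal J) :
    T - MvPolynomial.aeval F (H - MvPolynomial.C (MvPolynomial.constantCoeff H)) ∈
      coeffIdeal J := by
  have hc : MvPolynomial.constantCoeff H ∈ J := by
    simpa [hT, constantCoeff_aeval hF] using mem_coeffIdeal.mp hH 0
  rw [map_sub, MvPolynomial.aeval_C, sub_sub_eq_add_sub, add_sub_right_comm]
  exact add_mem hH (C_mem_coeffIdeal hc)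

end Lifting

/-- If `F ∈ (R,I)⟨X_1,…,X_n⟩ⁿ` has `F(0) = 0` and its coefficientwise reduction mod `I` is
invertible in `(R/I)[X_1,…,X_n]ⁿ`, then for every `e ≥ 1` and every index `i` there is
`H ∈ (R,I)⟨X_1,…,X_n⟩` with `H(0) = 0` such that all coefficients of `X_i - H(F_1,…,F_n)`
lie in `I^e`. -/
theorem stmt_10 (R : Type*) [CommRing R] (I : Ideal R) (n : ℕ)
    (F : Fin n → MvPowerSeries (Fin n) R)
    (hFT : ∀ i, TateMem I (F i))
    (hF0 : ∀ i, MvPowerSeries.constantCoeff (F i) = 0)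
    (Fbar : Fin n → MvPolynomial (Fin n) (R ⧸ I))
    (hFbar : ∀ i, (Fbar i : MvPowerSeries (Fin n) (R ⧸ I)) =
      MvPowerSeries.map (Ideal.Quotient.mk I) (F i))
    (hinv : ∃ Gbar : Fin n → MvPolynomial (Fin n) (R ⧸ I),
      (∀ i, MvPolynomial.bind₁ Gbar (Fbar i) = MvPolynomial.X i) ∧
      (∀ i, MvPolynomial.bind₁ Fbar (Gbar i) = MvPolynomial.X i)) :
    ∀ e : ℕ, 1 ≤ e → ∀ i : Fin n,
      ∃ H : MvPowerSeries (Fin n) R, TateMem I H ∧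
        MvPowerSeries.constantCoeff H = 0 ∧
        ∀ d : Fin n →₀ ℕ,
          MvPowerSeries.coeff d (MvPowerSeries.X i - psSubst F H) ∈ I ^ e := by
  obtain ⟨Gbar, -, hGbar⟩ := hinv
  choose G hG using fun j =>
    MvPolynomial.map_surjective _ Ideal.Quotient.mk_surjective (Gbar j)
  have hGF : ∀ j, X j - MvPolynomial.aeval F (G j) ∈ coeffIdeal I := fun j =>
    X_sub_aeval_mem_coeffIdeal hFbar (by rw [hG j, hGbar j])
  intro e _ i
  obtain ⟨H, hH⟩ := exists_sub_aeval_mem_coeffIdeal_pow hFT hGF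
    (MvPolynomial.coe_X (R := R) i ▸ tateMem_coe I (MvPolynomial.X i)) e
  refine ⟨_, tateMem_coe I (H - MvPolynomial.C (MvPolynomial.constantCoeff H)), ?_, ?_⟩
  · rw [← coeff_zero_eq_constantCoeff_apply, MvPolynomial.coeff_coe]
    simp [MvPolynomial.constantCoeff_eq]
  · rw [psSubst_coe]
    exact mem_coeffIdeal.mp (sub_aeval_sub_C_constantCoeff_mem hF0 (constantCoeff_X i) hH)
end

section
/- Let S be a commutative topological ring, R a subring of S carrying the subspace topology. For a topological ring T, let T⟨X_1,…,X_n⟩ denote the set of formal power series over T whose family of coefficients tends to 0 along the cofinite filter on the index set of monomials. Let F ∈ R⟨X_1,…,X_n⟩^n satisfy F(0) = 0 and suppose the determinant of the matrix of degree-one coefficients (JF)(0) = (coefficient of X_j in F_i)_{i,j} is a unit of R. If there exists G ∈ S⟨X_1,…,X_n⟩^n with F∘G = G∘F = (X_1,…,X_n) (F viewed over S), then every coefficient of every component of G lies in R; that is, G ∈ R⟨X_1,…,X_n⟩^n. -/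
open MvPowerSeries

/-- Membership in the Tate algebra over a topological ring: the coefficients tend to `0`
along the cofinite filter, i.e. for every neighborhood `U` of `0` all but finitely many
coefficients lie in `U`. -/
def TateMemTop {n : ℕ} {T : Type*} [CommRing T] [TopologicalSpace T]
    (f : MvPowerSeries (Fin n) T) : Prop :=
  ∀ U ∈ nhds (0 : T), {d : Fin n →₀ ℕ | MvPowerSeries.coeff d f ∉ U}.Finite

/-!
Compare the coefficients of `X^e` on both sides of `F ∘ G = X`, by strong induction on the total
degree of `e`. If `A` is the linear part of `F`, the coefficient of `X^e` in `F_i ∘ G` is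
`∑ j, A i j * coeff e (G j)` plus terms `coeff d (F i) * coeff e (∏ j, G j ^ d j)` with `|d| ≥ 2`.
As the `G j` have no constant term, each such coefficient of a product of at least two factors
only involves coefficients of `G` of degree `< |e|`, which lie in `R` by induction. So
`A *ᵥ (coeff e ∘ G)` has entries in `R`, and inverting `A` over `R` gives the claim.
-/

open Finset

section Coefficients

variable {σ ι S : Type*} [CommSemiring S] {R : Subsemiring S}

theorem MvPowerSeries.coeff_prod_mem_of_two_le_card (s : Finset ι)
    (f : ι → MvPowerSeries σ S) (hf0 : ∀ i ∈ s, constantCoeff (f i) = 0) (hs : 2 ≤ #s)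
    (e : σ →₀ ℕ) (hR : ∀ i ∈ s, ∀ u, u.degree < e.degree → coeff u (f i) ∈ R) :
    coeff e (∏ i ∈ s, f i) ∈ R := by
  classical
  rw [coeff_prod]
  refine sum_mem fun l hl => ?_
  rw [mem_finsuppAntidiag] at hl
  by_cases hzero : ∃ i ∈ s, l i = 0
  · obtain ⟨i, hi, hli⟩ := hzero
    rw [prod_eq_zero hi (by rw [hli, coeff_zero_eq_constantCoeff, hf0 i hi])]
    exact zero_mem R
  push Not at hzero
  refine prod_mem fun i hi => hR i hi _ ?_
  -- another factor has positive degree, so each factor has degree below `e`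
  obtain ⟨j, hj, hji⟩ := exists_mem_ne hs i
  have hpair : (l i).degree + (l j).degree ≤ e.degree := by
    calc (l i).degree + (l j).degree = ∑ k ∈ {i, j}, (l k).degree :=
          (sum_pair (f := fun k => (l k).degree) hji.symm).symm
      _ ≤ ∑ k ∈ s, (l k).degree :=
        sum_le_sum_of_subset (insert_subset hi (singleton_subset_iff.mpr hj))
      _ = e.degree := by rw [← hl.1, map_sum]
  have hj_pos : 0 < (l j).degree :=
    Nat.pos_of_ne_zero fun h => hzero j hj ((Finsupp.degree_eq_zero_iff _).mp h)
  omega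

variable [Fintype ι] (G : ι → MvPowerSeries σ S)

theorem MvPowerSeries.coeff_prod_pow_eq_zero_of_degree_lt
    (hG0 : ∀ j, constantCoeff (G j) = 0) {d : ι →₀ ℕ} {e : σ →₀ ℕ}
    (h : e.degree < d.degree) : coeff e (∏ j, G j ^ d j) = 0 := by
  refine coeff_of_lt_order ((ENat.natCast_lt_natCast.mpr h).trans_le ?_)
  calc (d.degree : ℕ∞) = ∑ j, ((d j : ℕ) : ℕ∞) := by simp [Finsupp.degree_eq_sum]
    _ ≤ ∑ j, (G j ^ d j).order :=
      sum_le_sum fun j _ => le_order_pow_of_constantCoeff_eq_zero _ (hG0 j)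
    _ ≤ (∏ j, G j ^ d j).order := le_order_prod _ _

theorem MvPowerSeries.coeff_prod_pow_mem (hG0 : ∀ j, constantCoeff (G j) = 0)
    {d : ι →₀ ℕ} (hd : 2 ≤ d.degree) (e : σ →₀ ℕ)
    (hR : ∀ j u, u.degree < e.degree → coeff u (G j) ∈ R) :
    coeff e (∏ j, G j ^ d j) ∈ R := by
  have hflat : ∏ j, G j ^ d j = ∏ p : Σ j, Fin (d j), G p.1 := by
    simp [Fintype.prod_sigma]
  rw [hflat]
  refine coeff_prod_mem_of_two_le_card _ _ (fun p _ => hG0 p.1) ?_ e fun p _ => hR p.1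
  simpa [Fintype.card_sigma, Finsupp.degree_eq_sum] using hd

end Coefficients

open Matrix in
theorem Matrix.mem_of_mulVec_mem {ι S : Type*} [Fintype ι] [DecidableEq ι] [CommRing S]
    {R : Subring S} (A : Matrix ι ι R) (hA : IsUnit A.det) (v : ι → S)
    (hAv : ∀ i, (A.map R.subtype *ᵥ v) i ∈ R) (i : ι) : v i ∈ R := by
  have hv : v = A⁻¹.map R.subtype *ᵥ (A.map R.subtype *ᵥ v) := by
    rw [mulVec_mulVec, ← Matrix.map_mul, nonsing_inv_mul A hA,
      Matrix.map_one _ (map_zero _) (map_one _), one_mulVec]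
  rw [hv]
  exact sum_mem fun j _ => mul_mem (A⁻¹ i j).2 (hAv j)

theorem coeff_psSubst_sub_linear_mem {n : ℕ} {S : Type*} [CommRing S] {R : Subring S}
    (G : Fin n → MvPowerSeries (Fin n) S) (hG0 : ∀ j, constantCoeff (G j) = 0)
    (f : MvPowerSeries (Fin n) R) (hf0 : constantCoeff f = 0) (e : Fin n →₀ ℕ)
    (hR : ∀ j u, u.degree < e.degree → coeff u (G j) ∈ R) :
    coeff e (psSubst G (map R.subtype f)) -
      ∑ j, ((coeff (Finsupp.single j 1) f : R) : S) * coeff e (G j) ∈ R := by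
  set a : (Fin n →₀ ℕ) → S := fun d => coeff d (map R.subtype f) * coeff e (∏ j, G j ^ d j)
  have hfin : (Set.univ ∩ Function.support a).Finite := by
    refine (Finsupp.finite_of_degree_le e.degree).subset fun d hd => ?_
    by_contra h
    exact hd.2 (by simp [a, coeff_prod_pow_eq_zero_of_degree_lt G hG0 (not_le.mp h)])
  have hlin : ∑ᶠ d ∈ {d : Fin n →₀ ℕ | d.degree = 1}, a d =
      ∑ j, ((coeff (Finsupp.single j 1) f : R) : S) * coeff e (G j) := by
    rw [← Finsupp.range_single_one, finsum_mem_range (Finsupp.single_left_injective one_ne_zero),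
      finsum_eq_sum_of_fintype]
    simp [a, Finsupp.single_apply, pow_ite]
  have hsplit := finsum_mem_add_sdiff' (Set.subset_univ {d : Fin n →₀ ℕ | d.degree = 1}) hfin
  rw [finsum_mem_univ] at hsplit
  change ∑ᶠ d, a d - _ ∈ R
  rw [← hsplit, hlin, add_sub_cancel_left]
  refine finsum_mem_induction (· ∈ R) (zero_mem R) (fun _ _ => add_mem) fun d hd => ?_
  rcases Nat.lt_or_ge d.degree 2 with h | h
  · have hd1 : d.degree ≠ 1 := hd.2
    obtain rfl : d = 0 := (Finsupp.degree_eq_zero_iff d).mp (by omega)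
    simp [a, hf0]
  · exact mul_mem (by simp) (coeff_prod_pow_mem (R := R.toSubsemiring) G hG0 h e hR)

theorem stmt_13_general (S : Type*) [CommRing S]
    (R : Subring S) (n : ℕ)
    (F : Fin n → MvPowerSeries (Fin n) R)
    (hF0 : ∀ i, MvPowerSeries.constantCoeff (F i) = 0)
    (hdet : IsUnit (Matrix.det (Matrix.of fun i j =>
      MvPowerSeries.coeff (Finsupp.single j 1) (F i))))
    (G : Fin n → MvPowerSeries (Fin n) S)
    (hG0 : ∀ i, MvPowerSeries.constantCoeff (G i) = 0)
    (hFG : ∀ i, psSubst G (MvPowerSeries.map R.subtype (F i)) = MvPowerSeries.X i) :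
    ∀ i, ∀ d : Fin n →₀ ℕ, MvPowerSeries.coeff d (G i) ∈ R := by
  intro i e
  induction hk : e.degree using Nat.strong_induction_on generalizing i e with
  | _ k ih =>
  subst hk
  refine Matrix.mem_of_mulVec_mem _ hdet (fun j => coeff e (G j)) (fun i' => ?_) i
  have hlin := coeff_psSubst_sub_linear_mem G hG0 (F i') (hF0 i') e
    fun j u hu => ih _ hu j u rfl
  have hX : coeff e (X i' : MvPowerSeries (Fin n) S) ∈ R := by
    rw [coeff_X]
    split_ifs <;> simp
  rw [hFG i'] at hlin
  convert sub_mem hX hlin using 1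
  simp [Matrix.mulVec, dotProduct]

/-- Let `R` be a subring of the topological ring `S`, with the subspace topology. If
`F ∈ R⟨X_1,…,X_n⟩ⁿ` has `F(0) = 0` and `det JF(0)` a unit of `R`, and `G ∈ S⟨X_1,…,X_n⟩ⁿ`
is an inverse of `F` (viewed over `S`), then all coefficients of `G` lie in `R`. -/
theorem stmt_13 (S : Type*) [CommRing S] [TopologicalSpace S] [IsTopologicalRing S]
    (R : Subring S) (n : ℕ)
    (F : Fin n → MvPowerSeries (Fin n) R)
    (hFT : ∀ i, TateMemTop (F i))
    (hF0 : ∀ i, MvPowerSeries.constantCoeff (F i) = 0)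
    (hdet : IsUnit (Matrix.det (Matrix.of fun i j =>
      MvPowerSeries.coeff (Finsupp.single j 1) (F i))))
    (G : Fin n → MvPowerSeries (Fin n) S)
    (hGT : ∀ i, TateMemTop (G i))
    (hG0 : ∀ i, MvPowerSeries.constantCoeff (G i) = 0)
    (hFG : ∀ i, psSubst G (MvPowerSeries.map R.subtype (F i)) = MvPowerSeries.X i)
    (hGF : ∀ i, psSubst (fun j => MvPowerSeries.map R.subtype (F j)) (G i) =
      MvPowerSeries.X i) :
    ∀ i, ∀ d : Fin n →₀ ℕ, MvPowerSeries.coeff d (G i) ∈ R :=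
  stmt_13_general S R n F hF0 hdet G hG0 hFG
end
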